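/- arXiv:1002.2860 — 6 statements merged into one kernel-verified Lean document; each statement's English description precedes it below -/
import Mathlib

section
/- Let ε > 0, a > 0, and let s : I → ℝ be a locally Lipschitz function on an open interval I containing 0 such that −s'(t) + s(t)² − a² ≥ 0 at almost every t ∈ I, and s(0) ≤ a·coth(aε). Then s(t) ≤ a·coth(a(ε−t)) for every t ∈ I ∩ [0, ε). -/
/-!
With `w t = sinh (a (ε - t))`, the barrier `a coth (a (ε - t)) = -w' / w` solves the Riccati
equation `s' = s² - a²`. Where `w > 0`, the bound `s ≤ -w' / w` says `u := s w + w' ≤ 0`, and the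
Riccati inequality for `s` becomes the linear inequality `u' ≤ s u`. On `[0, t]` the function `s` is
Lipschitz, so `u` is absolutely continuous, and Grönwall's argument (`u · exp (-∫ s)` is
nonincreasing) carries `u 0 ≤ 0` over to `u t ≤ 0`.
-/

open Real Set MeasureTheory

/-- The hyperbolic cotangent. -/
noncomputable def coth (x : ℝ) : ℝ := Real.cosh x / Real.sinh x

theorem AbsolutelyContinuousOnInterval.le_of_ae_hasDerivAt_nonpos {f : ℝ → ℝ} {a b : ℝ}
    (hf : AbsolutelyContinuousOnInterval f a b) (hab : a ≤ b)
    (hf' : ∀ᵐ t, t ∈ Icc a b → ∃ d, HasDerivAt f d t ∧ d ≤ 0) :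
    f b ≤ f a := by
  have hint : 0 ≤ ∫ t in a..b, -deriv f t := by
    refine intervalIntegral.integral_nonneg_of_ae_restrict hab ?_
    rw [Filter.EventuallyLE, ae_restrict_iff' measurableSet_Icc]
    filter_upwards [hf'] with t ht htab
    obtain ⟨d, hd, hd0⟩ := ht htab
    simpa [hd.deriv] using hd0
  rw [intervalIntegral.integral_neg, hf.integral_deriv_eq_sub] at hint
  linarith

theorem AbsolutelyContinuousOnInterval.le_mul_exp_integral_of_ae_hasDerivAt_le {u p : ℝ → ℝ}
    {a b : ℝ} (hu : AbsolutelyContinuousOnInterval u a b) (hp : Continuous p) (hab : a ≤ b)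
    (hu' : ∀ᵐ t, t ∈ Icc a b → ∃ d, HasDerivAt u d t ∧ d ≤ p t * u t) :
    u b ≤ u a * exp (∫ t in a..b, p t) := by
  set P : ℝ → ℝ := fun t ↦ ∫ τ in a..t, p τ
  have hP (t : ℝ) : HasDerivAt P (p t) t := (hp.integral_hasStrictDerivAt a t).hasDerivAt
  have hE (t : ℝ) : HasDerivAt (fun t ↦ exp (-P t)) (-p t * exp (-P t)) t := by
    simpa [mul_comm] using ((hP t).neg).exp
  have hP_cont : Continuous P := continuous_iff_continuousAt.2 fun t ↦ (hP t).continuousAt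
  have hE_ac : AbsolutelyContinuousOnInterval (fun t ↦ exp (-P t)) a b := by
    refine ContDiffOn.absolutelyContinuousOnInterval (ContDiff.contDiffOn ?_)
    refine contDiff_one_iff_deriv.2 ⟨fun t ↦ (hE t).differentiableAt, ?_⟩
    rw [funext fun t ↦ (hE t).deriv]
    fun_prop
  have hv : u b * exp (-P b) ≤ u a * exp (-P a) := by
    refine (hu.fun_mul hE_ac).le_of_ae_hasDerivAt_nonpos hab ?_
    filter_upwards [hu'] with t ht htab
    obtain ⟨d, hd, hdp⟩ := ht htab
    refine ⟨_, hd.mul (hE t), ?_⟩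
    have : 0 < exp (-P t) := exp_pos _
    nlinarith
  have hPa : P a = 0 := intervalIntegral.integral_same
  rwa [hPa, neg_zero, exp_zero, mul_one, exp_neg, ← div_eq_mul_inv, div_le_iff₀ (exp_pos _)] at hv

theorem le_mul_coth_iff {y a z : ℝ} (hz : 0 < z) :
    y ≤ a * coth z ↔ y * sinh z - a * cosh z ≤ 0 := by
  rw [coth, mul_div_assoc', le_div_iff₀ (sinh_pos_iff.2 hz), sub_nonpos]

theorem hasDerivAt_mul_sinh_sub_mul_cosh {s : ℝ → ℝ} {d t : ℝ} (a ε : ℝ) (hs : HasDerivAt s d t) :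
    HasDerivAt (fun t ↦ s t * sinh (a * (ε - t)) - a * cosh (a * (ε - t)))
      ((d + a ^ 2) * sinh (a * (ε - t)) - a * s t * cosh (a * (ε - t))) t := by
  have hlin : HasDerivAt (fun t ↦ a * (ε - t)) (-a) t := by
    simpa using ((hasDerivAt_id t).const_sub ε).const_mul a
  exact ((hs.fun_mul hlin.sinh).fun_sub (hlin.cosh.const_mul a)).congr_deriv (by ring)

theorem stmt_2_general (ε a : ℝ) (ha : 0 < a)
    (I : Set ℝ) (hIconn : I.OrdConnected) (h0I : (0 : ℝ) ∈ I)
    (s : ℝ → ℝ) (hs : LocallyLipschitzOn I s)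
    (hineq : ∀ᵐ t ∂(volume : Measure ℝ), t ∈ I →
      ∃ d : ℝ, HasDerivAt s d t ∧ 0 ≤ -d + (s t) ^ 2 - a ^ 2)
    (h0 : s 0 ≤ a * coth (a * ε)) :
    ∀ t ∈ I ∩ Ico 0 ε, s t ≤ a * coth (a * (ε - t)) := by
  rintro x ⟨hxI, hx0, hxε⟩
  have hpos (t : ℝ) (ht : t ≤ x) : 0 < a * (ε - t) := mul_pos ha (by linarith)
  have hIcc : Icc 0 x ⊆ I := hIconn.out h0I hxI
  obtain ⟨K, hK⟩ := (hs.mono hIcc).exists_lipschitzOnWith_of_compact isCompact_Icc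
  obtain ⟨p, hp, hsp⟩ := hK.extend_real
  set u : ℝ → ℝ := fun t ↦ s t * sinh (a * (ε - t)) - a * cosh (a * (ε - t))
  have hu : AbsolutelyContinuousOnInterval u 0 x := by
    rw [← uIcc_of_le hx0] at hK
    refine (hK.absolutelyContinuousOnInterval.fun_mul ?_).fun_sub
      (AbsolutelyContinuousOnInterval.const_mul a ?_) <;>
    exact ContDiffOn.absolutelyContinuousOnInterval (by fun_prop)
  have hu' : ∀ᵐ t, t ∈ Icc 0 x → ∃ d, HasDerivAt u d t ∧ d ≤ p t * u t := by
    filter_upwards [hineq] with t ht htx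
    obtain ⟨d, hd, hdle⟩ := ht (hIcc htx)
    refine ⟨_, hasDerivAt_mul_sinh_sub_mul_cosh a ε hd, ?_⟩
    rw [← hsp htx]
    nlinarith [sinh_pos_iff.2 (hpos t htx.2)]
  have hu0 : u 0 ≤ 0 := by simpa [u] using (le_mul_coth_iff (by simpa using hpos 0 hx0)).1 h0
  have hux : u x ≤ 0 :=
    (hu.le_mul_exp_integral_of_ae_hasDerivAt_le hp.continuous hx0 hu').trans
      (mul_nonpos_of_nonpos_of_nonneg hu0 (exp_pos _).le)
  exact (le_mul_coth_iff (hpos x le_rfl)).2 hux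

theorem stmt_2 (ε a : ℝ) (hε : 0 < ε) (ha : 0 < a)
    (I : Set ℝ) (hIopen : IsOpen I) (hIconn : I.OrdConnected) (h0I : (0 : ℝ) ∈ I)
    (s : ℝ → ℝ) (hs : LocallyLipschitzOn I s)
    (hineq : ∀ᵐ t ∂(volume : Measure ℝ), t ∈ I →
      ∃ d : ℝ, HasDerivAt s d t ∧ 0 ≤ -d + (s t) ^ 2 - a ^ 2)
    (h0 : s 0 ≤ a * coth (a * ε)) :
    ∀ t ∈ I ∩ Ico 0 ε, s t ≤ a * coth (a * (ε - t)) :=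
  stmt_2_general ε a ha I hIconn h0I s hs hineq h0
end

section
/- Let ε > 0, b > 0, and let s : [0, ε) → ℝ be a locally Lipschitz function such that −s'(t) + s(t)² − b² ≤ 0 at almost every t ∈ [0, ε). Then s(0) ≤ b·coth(bε). -/
/-!
Let `T x = arcoth (x / b) / b` be the time at which the solution of `y' = y ^ 2 - b ^ 2` starting
from `x > b` blows up. Along a supersolution `s > b` we have `(T ∘ s)' = -s' / (s ^ 2 - b ^ 2) ≤ -1`,
so `T (s t) + t` is nonincreasing. Hence `s` is nondecreasing, so it never comes down to `b`, and
`T (s t) ≤ T (s 0) - t`. If `s 0 > b * coth (b * ε)` then `T (s 0) < ε`, and at `t = T (s 0)` this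
contradicts `T > 0`.
-/

open Real Set MeasureTheory Filter Topology

lemma one_lt_coth {x : ℝ} (hx : 0 < x) : 1 < coth x := by
  have hsinh : 0 < sinh x := sinh_pos_iff.2 hx
  rw [coth, one_lt_div hsinh, ← sub_pos, cosh_sub_sinh]
  exact exp_pos _

lemma LocallyLipschitzOn.comp {α β γ : Type*} [PseudoEMetricSpace α] [PseudoEMetricSpace β]
    [PseudoEMetricSpace γ] {g : β → γ} {f : α → β} {s : Set α} {t : Set β}
    (hg : LocallyLipschitzOn t g) (hf : LocallyLipschitzOn s f) (hst : MapsTo f s t) :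
    LocallyLipschitzOn s (g ∘ f) := by
  intro x hx
  obtain ⟨Kf, u, hu, hfu⟩ := hf hx
  obtain ⟨Kg, v, hv, hgv⟩ := hg (hst hx)
  have hfv : f ⁻¹' v ∈ 𝓝[s] x := (hf.continuousOn x hx).tendsto_nhdsWithin hst hv
  exact ⟨Kg * Kf, u ∩ f ⁻¹' v, inter_mem hu hfv,
    hgv.comp (hfu.mono inter_subset_left) fun y hy => hy.2⟩

/-- A locally Lipschitz function is absolutely continuous on compact intervals, so it is the
integral of its a.e. derivative. -/
theorem LocallyLipschitzOn.image_sub_le_mul_sub_of_ae_hasDerivAt_le {f : ℝ → ℝ} {a b c : ℝ}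
    (hf : LocallyLipschitzOn (Icc a b) f) (hab : a ≤ b)
    (hf' : ∀ᵐ t, t ∈ Ioo a b → ∃ d, HasDerivAt f d t ∧ d ≤ c) :
    f b - f a ≤ c * (b - a) := by
  obtain ⟨K, hK⟩ := hf.exists_lipschitzOnWith_of_compact isCompact_Icc
  rw [← uIcc_of_le hab] at hK
  have hac := hK.absolutelyContinuousOnInterval
  have hderiv : ∀ᵐ t ∂volume.restrict (Icc a b), deriv f t ≤ c := by
    rw [← Measure.restrict_congr_set Ioo_ae_eq_Icc, ae_restrict_iff' measurableSet_Ioo]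
    filter_upwards [hf'] with t ht hmem
    obtain ⟨d, hd, hdc⟩ := ht hmem
    exact hd.deriv ▸ hdc
  calc f b - f a = ∫ t in a..b, deriv f t := hac.integral_deriv_eq_sub.symm
    _ ≤ ∫ _ in a..b, c :=
      intervalIntegral.integral_mono_ae_restrict hab hac.intervalIntegrable_deriv
        intervalIntegrable_const hderiv
    _ = c * (b - a) := by simp [mul_comm]

/-- For `b < x`, the solution of `y' = y ^ 2 - b ^ 2`, `y 0 = x`, is `t ↦ b * coth (b * (T - t))`
with `T = riccatiBlowupTime b x`. -/
noncomputable def riccatiBlowupTime (b x : ℝ) : ℝ := (log (x + b) - log (x - b)) / (2 * b)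

section riccatiBlowupTime

variable {b x : ℝ}

lemma riccatiBlowupTime_pos (hb : 0 < b) (hx : b < x) : 0 < riccatiBlowupTime b x :=
  div_pos (sub_pos.2 (log_lt_log (by linarith) (by linarith))) (by positivity)

lemma hasDerivAt_riccatiBlowupTime (hb : 0 < b) (hx : b < x) :
    HasDerivAt (riccatiBlowupTime b) (-1 / (x ^ 2 - b ^ 2)) x := by
  have hplus : HasDerivAt (fun y => log (y + b)) (1 / (x + b)) x := by
    simpa using ((hasDerivAt_id x).add_const b).log (by simp only [id]; linarith)
  have hminus : HasDerivAt (fun y => log (y - b)) (1 / (x - b)) x := by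
    simpa using ((hasDerivAt_id x).sub_const b).log (by simp only [id]; linarith)
  refine ((hplus.sub hminus).div_const (2 * b)).congr_deriv ?_
  have : x - b ≠ 0 := by linarith
  have : x + b ≠ 0 := by linarith
  have : x ^ 2 - b ^ 2 ≠ 0 := by nlinarith
  field_simp
  ring

lemma strictAntiOn_riccatiBlowupTime (hb : 0 < b) :
    StrictAntiOn (riccatiBlowupTime b) (Ioi b) := by
  have hderiv (x) (hx : x ∈ Ioi b) := hasDerivAt_riccatiBlowupTime hb hx
  refine strictAntiOn_of_hasDerivWithinAt_neg (convex_Ioi b)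
    (fun x hx => (hderiv x hx).continuousAt.continuousWithinAt)
    (f' := fun x => -1 / (x ^ 2 - b ^ 2))
    (fun x hx => (hderiv x (interior_subset hx)).hasDerivWithinAt) fun x hx => ?_
  rw [interior_Ioi] at hx
  have : 0 < x ^ 2 - b ^ 2 := by nlinarith [mem_Ioi.1 hx]
  exact div_neg_of_neg_of_pos (by norm_num) this

lemma locallyLipschitzOn_riccatiBlowupTime (hb : 0 < b) :
    LocallyLipschitzOn (Ioi b) (riccatiBlowupTime b) := by
  refine ContDiffOn.locallyLipschitzOn (convex_Ioi b) ?_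
  unfold riccatiBlowupTime
  have : ∀ x ∈ Ioi b, x + b ≠ 0 ∧ x - b ≠ 0 := fun x hx => by
    constructor <;> linarith [mem_Ioi.1 hx]
  fun_prop (disch := simp_all)

lemma riccatiBlowupTime_mul_coth (hb : 0 < b) {τ : ℝ} (hτ : 0 < τ) :
    riccatiBlowupTime b (b * coth (b * τ)) = τ := by
  have hsinh : 0 < sinh (b * τ) := sinh_pos_iff.2 (by positivity)
  have hplus : b * coth (b * τ) + b = b * exp (b * τ) / sinh (b * τ) := by
    rw [coth, ← cosh_add_sinh]; field_simp
  have hminus : b * coth (b * τ) - b = b * exp (-(b * τ)) / sinh (b * τ) := by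
    rw [coth, ← cosh_sub_sinh]; field_simp
  rw [riccatiBlowupTime, hplus, hminus, ← log_div (by positivity) (by positivity),
    div_div_div_cancel_right₀ hsinh.ne', mul_div_mul_left _ _ hb.ne', ← exp_sub, log_exp]
  field_simp
  ring

end riccatiBlowupTime

theorem riccatiBlowupTime_comp_add_le {s : ℝ → ℝ} {a b t : ℝ} (hb : 0 < b) (hat : a ≤ t)
    (hs : LocallyLipschitzOn (Icc a t) s) (hsb : ∀ r ∈ Icc a t, b < s r)
    (hs' : ∀ᵐ r, r ∈ Ioo a t → ∃ d, HasDerivAt s d r ∧ s r ^ 2 - b ^ 2 ≤ d) :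
    riccatiBlowupTime b (s t) + (t - a) ≤ riccatiBlowupTime b (s a) := by
  have hlip : LocallyLipschitzOn (Icc a t) fun r => riccatiBlowupTime b (s r) + r :=
    ((locallyLipschitzOn_riccatiBlowupTime hb).comp hs hsb).add
      LipschitzWith.id.locallyLipschitz.locallyLipschitzOn
  have hderiv : ∀ᵐ r, r ∈ Ioo a t →
      ∃ d, HasDerivAt (fun r => riccatiBlowupTime b (s r) + r) d r ∧ d ≤ 0 := by
    filter_upwards [hs'] with r hr hrat
    obtain ⟨d, hd, hdb⟩ := hr hrat
    have hbr : b < s r := hsb r (Ioo_subset_Icc_self hrat)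
    have hpos : 0 < s r ^ 2 - b ^ 2 := by nlinarith
    refine ⟨-1 / (s r ^ 2 - b ^ 2) * d + 1,
      ((hasDerivAt_riccatiBlowupTime hb hbr).comp r hd).add (hasDerivAt_id r), ?_⟩
    rw [neg_div, neg_mul, div_mul_eq_mul_div, one_mul, neg_add_nonpos_iff, one_le_div hpos]
    exact hdb
  have := hlip.image_sub_le_mul_sub_of_ae_hasDerivAt_le hat hderiv
  linarith

theorem lt_on_Icc_of_riccati_supersolution {s : ℝ → ℝ} {a b t : ℝ} (hb : 0 < b)
    (hs : LocallyLipschitzOn (Icc a t) s)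
    (hs' : ∀ᵐ r, r ∈ Ioo a t → ∃ d, HasDerivAt s d r ∧ s r ^ 2 - b ^ 2 ≤ d) (ha : b < s a) :
    ∀ r ∈ Icc a t, b < s r := by
  by_contra! hbad
  set B := Icc a t ∩ s ⁻¹' Iic b
  have hBne : B.Nonempty := let ⟨r, hr, hrb⟩ := hbad; ⟨r, hr, hrb⟩
  have hBclosed : IsClosed B :=
    hs.continuousOn.preimage_isClosed_of_isClosed isClosed_Icc isClosed_Iic
  set t₀ := sInf B
  have ht₀ : t₀ ∈ B := (isCompact_Icc.of_isClosed_subset hBclosed inter_subset_left).sInf_mem hBne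
  have hgood : ∀ r ∈ Icc a t, r < t₀ → b < s r := fun r hr hrt₀ => by
    by_contra! hrb
    exact (csInf_le (bddBelow_Icc.mono inter_subset_left) ⟨hr, hrb⟩).not_gt hrt₀
  have hat₀ : a < t₀ := ht₀.1.1.lt_of_ne fun h => (h ▸ ht₀.2 : s a ≤ b).not_gt ha
  have hmono : ∀ r ∈ Ico a t₀, s a ≤ s r := fun r hr => by
    have hrt : r ≤ t := hr.2.le.trans ht₀.1.2
    have hsb (q) (hq : q ∈ Icc a r) : b < s q :=
      hgood q ⟨hq.1, hq.2.trans hrt⟩ (hq.2.trans_lt hr.2)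
    have hs'r : ∀ᵐ q, q ∈ Ioo a r → ∃ d, HasDerivAt s d q ∧ s q ^ 2 - b ^ 2 ≤ d := by
      filter_upwards [hs'] with q hq hqr using hq ⟨hqr.1, hqr.2.trans_le hrt⟩
    have := riccatiBlowupTime_comp_add_le hb hr.1 (hs.mono (Icc_subset_Icc_right hrt)) hsb hs'r
    exact ((strictAntiOn_riccatiBlowupTime hb).le_iff_ge (hsb r (right_mem_Icc.2 hr.1))
      (hsb a (left_mem_Icc.2 hr.1))).1 (by linarith [hr.1])
  have hcont : ContinuousWithinAt s (Ico a t₀) t₀ :=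
    (hs.continuousOn t₀ ht₀.1).mono (Ico_subset_Icc_self.trans (Icc_subset_Icc_right ht₀.1.2))
  have hmem : t₀ ∈ closure (Ico a t₀) := by
    rw [closure_Ico hat₀.ne]; exact right_mem_Icc.2 hat₀.le
  exact (ha.trans_le ((continuousWithinAt_const.closure_le hmem hcont hmono).trans ht₀.2)).false

theorem stmt_3 (ε b : ℝ) (hε : 0 < ε) (hb : 0 < b)
    (s : ℝ → ℝ) (hs : LocallyLipschitzOn (Ico 0 ε) s)
    (hineq : ∀ᵐ t ∂(volume : Measure ℝ), t ∈ Ico 0 ε →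
      ∃ d : ℝ, HasDerivWithinAt s d (Ico 0 ε) t ∧ -d + (s t) ^ 2 - b ^ 2 ≤ 0) :
    s 0 ≤ b * coth (b * ε) := by
  by_contra! h
  have hcoth : b < b * coth (b * ε) := lt_mul_of_one_lt_right hb (one_lt_coth (by positivity))
  have hs0 : b < s 0 := hcoth.trans h
  set T := riccatiBlowupTime b (s 0)
  have hT0 : 0 ≤ T := (riccatiBlowupTime_pos hb hs0).le
  have hTε : T < ε := riccatiBlowupTime_mul_coth hb hε ▸
    strictAntiOn_riccatiBlowupTime hb hcoth hs0 h
  have hsT : LocallyLipschitzOn (Icc 0 T) s := hs.mono (Icc_subset_Ico_right hTε)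
  have hs' : ∀ᵐ r, r ∈ Ioo 0 T → ∃ d, HasDerivAt s d r ∧ s r ^ 2 - b ^ 2 ≤ d := by
    filter_upwards [hineq] with r hr hrT
    obtain ⟨d, hd, hdb⟩ := hr ⟨hrT.1.le, hrT.2.trans hTε⟩
    exact ⟨d, hd.hasDerivAt (Ico_mem_nhds hrT.1 (hrT.2.trans hTε)), by linarith⟩
  have hsb := lt_on_Icc_of_riccati_supersolution hb hsT hs' hs0
  have := riccatiBlowupTime_comp_add_le hb hT0 hsT hsb hs'
  linarith [riccatiBlowupTime_pos hb (hsb T ⟨hT0, le_rfl⟩)]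
end

section
/- Let ε > 0, b > 0, and let i : [0, ε) → ℝ be a locally Lipschitz function such that −i'(t) + i(t)² − b² ≤ 0 at almost every t ∈ [0, ε), and i(0) ≥ b·tanh(bε). Then i(t) > 0 for every t ∈ [0, ε). -/
/-!
The function `u t = b * tanh (b * (ε - t))` solves the Riccati equation `u' = u ^ 2 - b ^ 2`, is
positive on `[0, ε)` and satisfies `u 0 ≤ i 0`. The difference `w = i - u` satisfies
`w' ≥ i ^ 2 - u ^ 2 = (i + u) w` almost everywhere, so `w * exp (-∫ (i + u))` is absolutely
continuous with almost everywhere nonnegative derivative, hence nondecreasing. Therefore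
`i ≥ u > 0`.
-/

open Real Set MeasureTheory

namespace Real

theorem hasDerivAt_tanh (x : ℝ) : HasDerivAt tanh (1 - tanh x ^ 2) x := by
  have h := (hasDerivAt_sinh x).div (hasDerivAt_cosh x) (cosh_pos x).ne'
  rw [show sinh / cosh = tanh from funext fun y => (tanh_eq_sinh_div_cosh y).symm] at h
  refine h.congr_deriv ?_
  rw [tanh_eq_sinh_div_cosh]
  field_simp

theorem tanh_pos {x : ℝ} (hx : 0 < x) : 0 < tanh x := by
  rw [tanh_eq_sinh_div_cosh]
  exact div_pos (sinh_pos_iff.mpr hx) (cosh_pos x)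

end Real

theorem absolutelyContinuousOnInterval_of_hasDerivAt {f f' : ℝ → ℝ}
    (hf : ∀ t, HasDerivAt f (f' t) t) (hf' : Continuous f') (a b : ℝ) :
    AbsolutelyContinuousOnInterval f a b := by
  have hderiv : deriv f = f' := funext fun t => (hf t).deriv
  refine (ContDiff.contDiffOn ?_).absolutelyContinuousOnInterval
  exact contDiff_one_iff_deriv.mpr ⟨fun t => (hf t).differentiableAt, hderiv ▸ hf'⟩

theorem AbsolutelyContinuousOnInterval.le_of_ae_hasDerivAt_nonneg {f : ℝ → ℝ} {a b : ℝ}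
    (hf : AbsolutelyContinuousOnInterval f a b) (hab : a ≤ b)
    (hder : ∀ᵐ t, t ∈ Ioo a b → ∃ d, HasDerivAt f d t ∧ 0 ≤ d) : f a ≤ f b := by
  have hnonneg : ∀ᵐ t ∂volume.restrict (Icc a b), 0 ≤ deriv f t := by
    rw [← Measure.restrict_congr_set Ioo_ae_eq_Icc]
    filter_upwards [ae_restrict_of_ae hder, ae_restrict_mem measurableSet_Ioo] with t ht htI
    obtain ⟨d, hd, hd0⟩ := ht htI
    exact hd.deriv ▸ hd0
  have := intervalIntegral.integral_nonneg_of_ae_restrict hab hnonneg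
  rw [hf.integral_deriv_eq_sub] at this
  linarith

theorem nonneg_of_ae_hasDerivAt_ge_mul {w c : ℝ → ℝ} {a b : ℝ} (hab : a ≤ b)
    (hw : AbsolutelyContinuousOnInterval w a b) (hc : Continuous c)
    (hder : ∀ᵐ t, t ∈ Ioo a b → ∃ d, HasDerivAt w d t ∧ c t * w t ≤ d) (ha : 0 ≤ w a) :
    0 ≤ w b := by
  set E : ℝ → ℝ := fun t => exp (-∫ s in a..t, c s)
  have hE : ∀ t, HasDerivAt E (-c t * E t) t := fun t => by
    simpa [E, mul_comm] using ((hc.integral_hasStrictDerivAt a t).hasDerivAt.neg).exp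
  have hE_cont : Continuous E := continuous_iff_continuousAt.mpr fun t => (hE t).continuousAt
  have hE_ac := absolutelyContinuousOnInterval_of_hasDerivAt hE (hc.neg.mul hE_cont) a b
  have hmono := (hw.fun_mul hE_ac).le_of_ae_hasDerivAt_nonneg hab ?_
  · simp only [E, intervalIntegral.integral_same, neg_zero, exp_zero, mul_one] at hmono
    exact nonneg_of_mul_nonneg_left (ha.trans hmono) (exp_pos _)
  filter_upwards [hder] with t ht htI
  obtain ⟨d, hd, hcd⟩ := ht htI
  refine ⟨_, hd.mul (hE t), ?_⟩
  have : 0 ≤ E t * (d - c t * w t) := mul_nonneg (exp_pos _).le (by linarith)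
  linarith

theorem riccati_solution_le_of_supersolution {i u : ℝ → ℝ} {k a b : ℝ} {K : NNReal}
    (hab : a ≤ b) (hi : LipschitzOnWith K i (Icc a b)) (hu : ∀ t, HasDerivAt u (u t ^ 2 - k) t)
    (hder : ∀ᵐ t, t ∈ Ioo a b → ∃ d, HasDerivAt i d t ∧ i t ^ 2 - k ≤ d) (ha : u a ≤ i a) :
    u b ≤ i b := by
  obtain ⟨j, hj, hij⟩ := hi.extend_real
  have hu_cont : Continuous u := continuous_iff_continuousAt.mpr fun t => (hu t).continuousAt
  have hu_ac := absolutelyContinuousOnInterval_of_hasDerivAt hu (by fun_prop) a b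
  have hj_ac : AbsolutelyContinuousOnInterval j a b :=
    (hj.lipschitzOnWith (s := uIcc a b)).absolutelyContinuousOnInterval
  -- `(j - u)' ≥ j ^ 2 - u ^ 2 = (j + u) (j - u)`
  have key := nonneg_of_ae_hasDerivAt_ge_mul (w := j - u) (c := j + u) hab (hj_ac.sub hu_ac)
    (hj.continuous.add hu_cont) ?_ (by simpa [← hij ⟨le_rfl, hab⟩] using ha)
  · simpa [← hij ⟨hab, le_rfl⟩] using key
  filter_upwards [hder] with t ht htI
  obtain ⟨d, hd, hdk⟩ := ht htI
  have hjd : HasDerivAt j d t := hd.congr_of_eventuallyEq <|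
    Filter.eventually_of_mem (Icc_mem_nhds htI.1 htI.2) fun s hs => (hij hs).symm
  refine ⟨_, hjd.sub (hu t), ?_⟩
  rw [hij (Ioo_subset_Icc_self htI)] at hdk
  simp only [Pi.add_apply, Pi.sub_apply]
  linarith

theorem hasDerivAt_mul_tanh_mul_sub (b ε t : ℝ) :
    HasDerivAt (fun t => b * tanh (b * (ε - t))) ((b * tanh (b * (ε - t))) ^ 2 - b ^ 2) t := by
  have hin : HasDerivAt (fun t : ℝ => b * (ε - t)) (-b) t := by
    simpa using ((hasDerivAt_id t).const_sub ε).const_mul b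
  refine (((hasDerivAt_tanh _).comp t hin).const_mul b).congr_deriv ?_
  ring

theorem stmt_4_general (ε b : ℝ) (hb : 0 < b)
    (i : ℝ → ℝ) (hi : LocallyLipschitzOn (Ico 0 ε) i)
    (hineq : ∀ᵐ t ∂(volume : Measure ℝ), t ∈ Ico 0 ε →
      ∃ d : ℝ, HasDerivWithinAt i d (Ico 0 ε) t ∧ -d + (i t) ^ 2 - b ^ 2 ≤ 0)
    (h0 : b * Real.tanh (b * ε) ≤ i 0) :
    ∀ t ∈ Ico 0 ε, 0 < i t := by
  rintro T ⟨hT0, hTε⟩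
  have hsub : Icc 0 T ⊆ Ico 0 ε := Icc_subset_Ico_right hTε
  obtain ⟨K, hK⟩ := (hi.mono hsub).exists_lipschitzOnWith_of_compact isCompact_Icc
  have hcomp := riccati_solution_le_of_supersolution (u := fun t => b * tanh (b * (ε - t)))
    hT0 hK (hasDerivAt_mul_tanh_mul_sub b ε) ?_ (by simpa using h0)
  · exact (mul_pos hb (tanh_pos (mul_pos hb (sub_pos.mpr hTε)))).trans_le hcomp
  filter_upwards [hineq] with t ht htI
  obtain ⟨d, hd, hdb⟩ := ht (hsub (Ioo_subset_Icc_self htI))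
  exact ⟨d, hd.hasDerivAt (Ico_mem_nhds htI.1 (htI.2.trans hTε)), by linarith⟩

theorem stmt_4 (ε b : ℝ) (hε : 0 < ε) (hb : 0 < b)
    (i : ℝ → ℝ) (hi : LocallyLipschitzOn (Ico 0 ε) i)
    (hineq : ∀ᵐ t ∂(volume : Measure ℝ), t ∈ Ico 0 ε →
      ∃ d : ℝ, HasDerivWithinAt i d (Ico 0 ε) t ∧ -d + (i t) ^ 2 - b ^ 2 ≤ 0)
    (h0 : b * Real.tanh (b * ε) ≤ i 0) :
    ∀ t ∈ Ico 0 ε, 0 < i t :=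
  stmt_4_general ε b hb i hi hineq h0
end

section
/- Let ε > 0, a > 0, and let i : [0, ε) → ℝ be a locally Lipschitz function such that i(t) ≥ 0 for all t ∈ [0, ε) and −i'(t) + i(t)² − a² ≥ 0 at almost every t ∈ [0, ε). Then i(0) ≥ a·tanh(aε). -/
open Real Set MeasureTheory Topology

/-!
Cayley-transform the supersolution: `w = (i - a) / (i + a)` lies in `[-1, 1)` because `i ≥ 0`,
and `h t = exp (-2 a t) * w t` satisfies `h' = 2 a exp (-2 a t) / (i + a)² * (i' - i² + a²) ≤ 0`
wherever `i` is differentiable. Since `h` is Lipschitz on each `[0, t]`, `t < ε`, it is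
nonincreasing there, so `w 0 = h 0 ≥ h t ≥ -exp (-2 a t)`. Letting `t → ε` gives
`w 0 ≥ -exp (-2 a ε)`, which is `i 0 ≥ a tanh (a ε)`.
-/

theorem AbsolutelyContinuousOnInterval.le_of_ae_hasDerivAt_nonpos_s5 {f : ℝ → ℝ} {c d : ℝ}
    (hcd : c ≤ d) (hf : AbsolutelyContinuousOnInterval f c d)
    (hf' : ∀ᵐ x, x ∈ Ioo c d → ∃ f', HasDerivAt f f' x ∧ f' ≤ 0) :
    f d ≤ f c := by
  have hderiv : 0 ≤ᵐ[volume.restrict (Icc c d)] fun x ↦ -deriv f x := by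
    refine ae_restrict_of_ae_eq_of_ae_restrict Ioo_ae_eq_Icc ?_
    rw [ae_restrict_iff' measurableSet_Ioo]
    filter_upwards [hf'] with x hx hmem
    obtain ⟨f', hf'x, hle⟩ := hx hmem
    simpa [hf'x.deriv] using hle
  have hint := intervalIntegral.integral_nonneg_of_ae_restrict hcd hderiv
  rw [intervalIntegral.integral_neg, hf.integral_deriv_eq_sub] at hint
  linarith

lemma lipschitzOnWith_sub_div_add {a : ℝ} (ha : 0 < a) :
    LipschitzOnWith (2 / a).toNNReal (fun x ↦ (x - a) / (x + a)) (Ici 0) := by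
  refine LipschitzOnWith.of_dist_le_mul fun x (hx : 0 ≤ x) y (hy : 0 ≤ y) ↦ ?_
  have hxa : 0 < x + a := by linarith
  have hya : 0 < y + a := by linarith
  rw [Real.coe_toNNReal _ (by positivity), dist_eq, dist_eq,
    show (x - a) / (x + a) - (y - a) / (y + a) = 2 * a * (x - y) / ((x + a) * (y + a)) by
      field_simp; ring,
    abs_div, abs_mul, abs_of_pos (by positivity : 0 < 2 * a),
    abs_of_pos (by positivity : 0 < (x + a) * (y + a)), div_le_iff₀ (by positivity)]
  have hden : a * a ≤ (x + a) * (y + a) := by nlinarith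
  calc 2 * a * |x - y| = 2 / a * |x - y| * (a * a) := by field_simp
    _ ≤ 2 / a * |x - y| * ((x + a) * (y + a)) := by gcongr

/-- Constant along the solutions `a tanh (a (C - t))` of `i' = i² - a²`, where it equals
`-exp (-2 a C)`. -/
noncomputable def riccatiInvariant (a : ℝ) (i : ℝ → ℝ) (t : ℝ) : ℝ :=
  exp (-(2 * a * t)) * ((i t - a) / (i t + a))

theorem hasDerivAt_riccatiInvariant {a d t : ℝ} {i : ℝ → ℝ} (hi : HasDerivAt i d t)
    (hne : i t + a ≠ 0) :
    HasDerivAt (riccatiInvariant a i)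
      (2 * a * exp (-(2 * a * t)) / (i t + a) ^ 2 * (d - (i t ^ 2 - a ^ 2))) t := by
  have hexp : HasDerivAt (fun t ↦ exp (-(2 * a * t))) (exp (-(2 * a * t)) * -(2 * a)) t := by
    simpa using ((hasDerivAt_id t).const_mul (2 * a)).neg.exp
  refine (hexp.mul ((hi.sub_const a).div (hi.add_const a) hne)).congr_deriv ?_
  simp only [Pi.div_apply]
  field_simp
  ring

theorem neg_exp_le_riccatiInvariant {a t : ℝ} {i : ℝ → ℝ} (ha : 0 < a) (hi : 0 ≤ i t) :
    -exp (-(2 * a * t)) ≤ riccatiInvariant a i t := by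
  have : -1 ≤ (i t - a) / (i t + a) := by
    rw [le_div_iff₀ (by linarith)]
    linarith
  unfold riccatiInvariant
  nlinarith [exp_pos (-(2 * a * t))]

theorem absolutelyContinuousOnInterval_riccatiInvariant {a c d : ℝ} {i : ℝ → ℝ} {K : NNReal}
    (ha : 0 < a) (hi : LipschitzOnWith K i (uIcc c d)) (hnonneg : MapsTo i (uIcc c d) (Ici 0)) :
    AbsolutelyContinuousOnInterval (riccatiInvariant a i) c d := by
  have hexp : AbsolutelyContinuousOnInterval (fun t ↦ exp (-(2 * a * t))) c d :=
    (ContDiff.contDiffOn (by fun_prop)).absolutelyContinuousOnInterval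
  exact hexp.mul ((lipschitzOnWith_sub_div_add ha).comp hi hnonneg).absolutelyContinuousOnInterval

theorem mul_tanh_le_of_neg_exp_le {a ε x : ℝ} (hx : 0 < x + a)
    (h : -exp (-(2 * a * ε)) ≤ (x - a) / (x + a)) : a * tanh (a * ε) ≤ x := by
  have hu := exp_pos (a * ε)
  have hv := exp_pos (-(a * ε))
  have huv : exp (a * ε) * exp (-(a * ε)) = 1 := by rw [← exp_add]; simp
  have hv2 : exp (-(2 * a * ε)) = exp (-(a * ε)) ^ 2 := by rw [← exp_nat_mul]; ring_nf
  rw [hv2, le_div_iff₀ hx] at h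
  rw [tanh_eq, mul_div_assoc', div_le_iff₀ (by positivity)]
  have hscaled := mul_le_mul_of_nonneg_left h hu.le
  have hcancel : exp (a * ε) * (-exp (-(a * ε)) ^ 2 * (x + a)) = -exp (-(a * ε)) * (x + a) := by
    linear_combination (-exp (-(a * ε)) * (x + a)) * huv
  nlinarith

theorem stmt_5 (ε a : ℝ) (hε : 0 < ε) (ha : 0 < a)
    (i : ℝ → ℝ) (hi : LocallyLipschitzOn (Ico 0 ε) i)
    (hnonneg : ∀ t ∈ Ico 0 ε, 0 ≤ i t)
    (hineq : ∀ᵐ t ∂(volume : Measure ℝ), t ∈ Ico 0 ε →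
      ∃ d : ℝ, HasDerivWithinAt i d (Ico 0 ε) t ∧ 0 ≤ -d + (i t) ^ 2 - a ^ 2) :
    a * Real.tanh (a * ε) ≤ i 0 := by
  have hdecr : ∀ t ∈ Ico 0 ε, riccatiInvariant a i t ≤ riccatiInvariant a i 0 := by
    intro t ht
    have hsub : uIcc 0 t ⊆ Ico 0 ε := uIcc_of_le ht.1 ▸ Icc_subset_Ico_right ht.2
    obtain ⟨K, hK⟩ := (hi.mono hsub).exists_lipschitzOnWith_of_compact isCompact_uIcc
    refine (absolutelyContinuousOnInterval_riccatiInvariant ha hK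
      fun s hs ↦ hnonneg s (hsub hs)).le_of_ae_hasDerivAt_nonpos_s5 ht.1 ?_
    filter_upwards [hineq] with s hs hmem
    have hsI : s ∈ Ico 0 ε := ⟨hmem.1.le, hmem.2.trans ht.2⟩
    obtain ⟨d, hd, hsuper⟩ := hs hsI
    have hpos : 0 < i s + a := by linarith [hnonneg s hsI]
    refine ⟨_, hasDerivAt_riccatiInvariant
      (hd.hasDerivAt (Ico_mem_nhds hmem.1 hsI.2)) hpos.ne', ?_⟩
    exact mul_nonpos_of_nonneg_of_nonpos (by positivity) (by linarith)
  have hbound : ∀ t ∈ Ico 0 ε, -exp (-(2 * a * t)) ≤ (i 0 - a) / (i 0 + a) := fun t ht ↦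
    (neg_exp_le_riccatiInvariant ha (hnonneg t ht)).trans
      (by simpa [riccatiInvariant] using hdecr t ht)
  have hlim : -exp (-(2 * a * ε)) ≤ (i 0 - a) / (i 0 + a) := by
    have hcont : Continuous fun t ↦ -exp (-(2 * a * t)) := by fun_prop
    refine le_of_tendsto (x := 𝓝[<] ε) (hcont.tendsto ε |>.mono_left nhdsWithin_le_nhds) ?_
    filter_upwards [Ioo_mem_nhdsLT hε] with t ht using hbound t ⟨ht.1.le, ht.2⟩
  exact mul_tanh_le_of_neg_exp_le (by linarith [hnonneg 0 ⟨le_rfl, hε⟩]) hlim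
end

section
/- Let E be a finite-dimensional real inner product space, A : I → Sym(E) a C¹ path of symmetric endomorphisms, t ∈ I an interior point at which the largest-eigenvalue function λ₊ is differentiable, and let v be a unit eigenvector of A(t) with eigenvalue λ₊(t). Then ⟨A'(t) v, v⟩ ≥ λ₊'(t). -/
/-! The Rayleigh quotient `u ↦ ⟪A u v, v⟫` lies below `λ₊` everywhere and touches it at `t`, so
where both are differentiable their derivatives at `t` coincide. -/

open Filter Topology
open scoped RealInnerProductSpace

theorem HasDerivAt.eq_of_eventuallyLE_of_eq {f g : ℝ → ℝ} {f' g' x : ℝ}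
    (hf : HasDerivAt f f' x) (hg : HasDerivAt g g' x) (hle : f ≤ᶠ[𝓝 x] g) (heq : f x = g x) :
    f' = g' := by
  have hmin : IsLocalMin (fun u => g u - f u) x := by
    filter_upwards [hle] with u hu
    linarith
  linarith [hmin.hasDerivAt_eq_zero (hg.sub hf)]

theorem inner_apply_le_sSup_inner_apply {E : Type*} [NormedAddCommGroup E]
    [InnerProductSpace ℝ E] (T : E →L[ℝ] E) {w : E} (hw : ‖w‖ = 1) :
    ⟪T w, w⟫ ≤ sSup {r : ℝ | ∃ v : E, ‖v‖ = 1 ∧ ⟪T v, v⟫ = r} := by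
  refine le_csSup ⟨‖T‖, ?_⟩ ⟨w, hw, rfl⟩
  rintro r ⟨v, hv, rfl⟩
  calc ⟪T v, v⟫ ≤ ‖T v‖ * ‖v‖ := real_inner_le_norm _ _
    _ ≤ ‖T‖ * ‖v‖ * ‖v‖ := by gcongr; exact T.le_opNorm v
    _ = ‖T‖ := by rw [hv]; ring

theorem HasDerivAt.inner_apply_self {E : Type*} [NormedAddCommGroup E] [InnerProductSpace ℝ E]
    {A : ℝ → E →L[ℝ] E} {A' : E →L[ℝ] E} {t : ℝ} (hA : HasDerivAt A A' t) (v : E) :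
    HasDerivAt (fun u => ⟪A u v, v⟫) ⟪A' v, v⟫ t := by
  have hAv : HasDerivAt (fun u => A u v) (A' v) t := by
    simpa using hA.clm_apply (hasDerivAt_const t v)
  simpa using hAv.inner ℝ (hasDerivAt_const t v)

theorem stmt_8_general {E : Type*} [NormedAddCommGroup E] [InnerProductSpace ℝ E]
    (t : ℝ)
    (A : ℝ → E →L[ℝ] E)
    (lam : ℝ → ℝ)
    (hlam : ∀ u, lam u = sSup {r : ℝ | ∃ v : E, ‖v‖ = 1 ∧ ⟪A u v, v⟫ = r})
    (A' : E →L[ℝ] E) (hA' : HasDerivAt A A' t)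
    (d : ℝ) (hd : HasDerivAt lam d t)
    (v : E) (hv : ‖v‖ = 1) (hev : A t v = lam t • v) :
    d ≤ ⟪A' v, v⟫ := by
  have hle : ∀ u, ⟪A u v, v⟫ ≤ lam u := fun u =>
    (hlam u).symm ▸ inner_apply_le_sSup_inner_apply (A u) hv
  have htouch : ⟪A t v, v⟫ = lam t := by
    rw [hev, real_inner_smul_left, real_inner_self_eq_norm_sq, hv]
    ring
  exact ((hA'.inner_apply_self v).eq_of_eventuallyLE_of_eq hd
    (Eventually.of_forall hle) htouch).ge

theorem stmt_8 {E : Type*} [NormedAddCommGroup E] [InnerProductSpace ℝ E]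
    [FiniteDimensional ℝ E] [Nontrivial E]
    (I : Set ℝ) (t : ℝ) (htI : I ∈ nhds t)
    (A : ℝ → E →L[ℝ] E) (hA : ContDiffOn ℝ 1 A I)
    (hsym : ∀ u ∈ I, ((A u : E →ₗ[ℝ] E)).IsSymmetric)
    (lam : ℝ → ℝ)
    (hlam : ∀ u, lam u = sSup {r : ℝ | ∃ v : E, ‖v‖ = 1 ∧ ⟪A u v, v⟫ = r})
    (A' : E →L[ℝ] E) (hA' : HasDerivAt A A' t)
    (d : ℝ) (hd : HasDerivAt lam d t)
    (v : E) (hv : ‖v‖ = 1) (hev : A t v = lam t • v) :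
    d ≤ ⟪A' v, v⟫ :=
  stmt_8_general t A lam hlam A' hA' d hd v hv hev
end

section
/- Let ε > 0, a > 0, and suppose s : [0, ε) → ℝ is locally Lipschitz with −s'(t) + s(t)² − a² ≥ 0 almost everywhere and s(0) ≤ a·coth(aε). Then for every t ∈ [0, ε), s(t) ≤ a·coth(a(ε − t)); in particular s is bounded above on every compact subinterval [0, T] with T < ε by a·coth(a(ε − T)). -/
/-!
The barrier `b t = a * coth (a * (ε - t))` solves the Riccati equation `b' = b ^ 2 - a ^ 2` with
`b 0 = a * coth (a * ε)`. Hence `φ = s - b` has `φ 0 ≤ 0` and, almost everywhere on `{φ > 0}`,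
`φ' ≤ s ^ 2 - b ^ 2 = (s + b) φ ≤ K φ`, where `K` bounds `s + b` on `[0, t]`. Since `s` is
Lipschitz on `[0, t]`, `φ` is absolutely continuous, and so is `χ = exp (-K x) * max φ 0`. Now
`χ 0 = 0` and `χ' ≤ 0` a.e. (where `φ ≤ 0`, `χ` attains its minimum `0`), so the fundamental
theorem of calculus for absolutely continuous functions gives `χ t ≤ 0`, that is `s t ≤ b t`.
-/

open Real Set MeasureTheory

open Filter Topology NNReal

theorem coth_le_coth {x y : ℝ} (hx : 0 < x) (hxy : x ≤ y) : coth y ≤ coth x := by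
  have hsinh_sub : 0 ≤ sinh (y - x) := sinh_nonneg_iff.mpr (sub_nonneg.mpr hxy)
  rw [sinh_sub] at hsinh_sub
  rw [coth, coth, div_le_div_iff₀ (sinh_pos_iff.mpr (hx.trans_le hxy)) (sinh_pos_iff.mpr hx)]
  linarith

theorem contDiffAt_coth {x : ℝ} (hx : x ≠ 0) {n : WithTop ℕ∞} : ContDiffAt ℝ n coth x :=
  contDiff_cosh.contDiffAt.div contDiff_sinh.contDiffAt (sinh_ne_zero.mpr hx)

theorem hasDerivAt_coth {x : ℝ} (hx : x ≠ 0) : HasDerivAt coth (1 - coth x ^ 2) x := by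
  have hsinh : sinh x ≠ 0 := sinh_ne_zero.mpr hx
  refine ((hasDerivAt_cosh x).div (hasDerivAt_sinh x) hsinh).congr_deriv ?_
  rw [coth, div_pow, one_sub_div (pow_ne_zero 2 hsinh)]
  ring

theorem hasDerivAt_mul_coth_mul_sub {a ε t : ℝ} (ha : a ≠ 0) (ht : t ≠ ε) :
    HasDerivAt (fun t ↦ a * coth (a * (ε - t))) ((a * coth (a * (ε - t))) ^ 2 - a ^ 2) t := by
  have hu : HasDerivAt (fun t ↦ a * (ε - t)) (-a) t := by
    simpa using ((hasDerivAt_id t).const_sub ε).const_mul a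
  refine (((hasDerivAt_coth (mul_ne_zero ha (sub_ne_zero.mpr ht.symm))).comp t hu).const_mul
    a).congr_deriv ?_
  ring

theorem LipschitzWith.comp_absolutelyContinuousOnInterval {X Y : Type*} [PseudoMetricSpace X]
    [PseudoMetricSpace Y] {g : X → Y} {K : ℝ≥0} {f : ℝ → X} {a b : ℝ} (hg : LipschitzWith K g)
    (hf : AbsolutelyContinuousOnInterval f a b) :
    AbsolutelyContinuousOnInterval (g ∘ f) a b := by
  have hKf := Tendsto.const_mul (K : ℝ) hf
  rw [mul_zero] at hKf
  refine squeeze_zero (fun _ ↦ Finset.sum_nonneg fun _ _ ↦ dist_nonneg) (fun E ↦ ?_) hKf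
  rw [Finset.mul_sum]
  exact Finset.sum_le_sum fun i _ ↦ hg.dist_le_mul _ _

theorem AbsolutelyContinuousOnInterval.nonpos_of_ae_hasDerivAt_le_mul {φ : ℝ → ℝ} {a b K : ℝ}
    (hab : a ≤ b) (hφ : AbsolutelyContinuousOnInterval φ a b) (ha : φ a ≤ 0)
    (hd : ∀ᵐ x, x ∈ Ioo a b → 0 < φ x → ∃ d, HasDerivAt φ d x ∧ d ≤ K * φ x) :
    φ b ≤ 0 := by
  set χ : ℝ → ℝ := fun x ↦ exp (-K * x) * max (φ x) 0 with hχ_def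
  have hχ_nonneg : 0 ≤ χ := fun x ↦ mul_nonneg (exp_pos _).le (le_max_right _ _)
  have hχ : AbsolutelyContinuousOnInterval χ a b :=
    (ContDiffOn.absolutelyContinuousOnInterval (by fun_prop)).fun_mul
      ((LipschitzWith.id.max_const 0).comp_absolutelyContinuousOnInterval hφ)
  have hderiv : ∀ᵐ x ∂volume.restrict (Icc a b), deriv χ x ≤ 0 := by
    rw [← Measure.restrict_congr_set Ioo_ae_eq_Icc, ae_restrict_iff' measurableSet_Ioo]
    filter_upwards [hd] with x hx hxab
    rcases le_or_gt (φ x) 0 with hφx | hφx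
    · have hχx : χ x = 0 := by simp [hχ_def, hφx]
      have hmin : IsLocalMin χ x :=
        IsMinOn.isLocalMin (fun y _ ↦ hχx ▸ hχ_nonneg y) univ_mem
      exact hmin.deriv_eq_zero.le
    · obtain ⟨d, hφd, hdK⟩ := hx hxab hφx
      have hχ_eq : χ =ᶠ[𝓝 x] fun y ↦ exp (-K * y) * φ y := by
        filter_upwards [hφd.continuousAt.eventually (lt_mem_nhds hφx)] with y hy
        simp [hχ_def, hy.le]
      have hχd := (((hasDerivAt_id x).const_mul (-K)).exp.mul hφd).congr_of_eventuallyEq hχ_eq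
      rw [hχd.deriv]
      simp only [id, mul_one]
      nlinarith [exp_pos (-K * x)]
  have hχb : χ b ≤ 0 := by
    have hχa : χ a = 0 := by simp [hχ_def, ha]
    have hle := intervalIntegral.integral_mono_ae_restrict hab hχ.intervalIntegrable_deriv
      intervalIntegrable_const hderiv
    rw [hχ.integral_deriv_eq_sub, hχa, intervalIntegral.integral_zero] at hle
    linarith
  exact (max_le_iff.mp (nonpos_of_mul_nonpos_right hχb (exp_pos _))).1

theorem le_mul_coth_mul_sub_of_ae_riccati {ε a : ℝ} (ha : 0 < a) {s : ℝ → ℝ}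
    (hs : LocallyLipschitzOn (Ico 0 ε) s)
    (hineq : ∀ᵐ t ∂(volume : Measure ℝ), t ∈ Ico 0 ε →
      ∃ d : ℝ, HasDerivWithinAt s d (Ico 0 ε) t ∧ 0 ≤ -d + (s t) ^ 2 - a ^ 2)
    (h0 : s 0 ≤ a * coth (a * ε)) {t : ℝ} (ht : t ∈ Ico 0 ε) :
    s t ≤ a * coth (a * (ε - t)) := by
  set b : ℝ → ℝ := fun x ↦ a * coth (a * (ε - x)) with hb_def
  have hsub : Icc 0 t ⊆ Ico 0 ε := Icc_subset_Ico_right ht.2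
  have hb : ContDiffOn ℝ 1 b (Icc 0 t) := fun x hx ↦ ContDiffAt.contDiffWithinAt <|
    contDiffAt_const.mul <| (contDiffAt_coth (mul_pos ha (sub_pos.mpr (hsub hx).2)).ne').comp x
      (contDiffAt_const.mul (contDiffAt_const.sub contDiffAt_id))
  obtain ⟨L, hL⟩ := (hs.mono hsub).exists_lipschitzOnWith_of_compact isCompact_Icc
  rw [← uIcc_of_le ht.1] at hL hb
  have hφ : AbsolutelyContinuousOnInterval (fun x ↦ s x - b x) 0 t :=
    hL.absolutelyContinuousOnInterval.fun_sub hb.absolutelyContinuousOnInterval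
  obtain ⟨K, hK⟩ := isCompact_uIcc.exists_bound_of_continuousOn
    ((hs.continuousOn.mono (uIcc_of_le ht.1 ▸ hsub)).add hb.continuousOn)
  have hφ0 : s 0 - b 0 ≤ 0 := by
    simp only [hb_def, sub_zero]
    linarith
  suffices hd : ∀ᵐ x, x ∈ Ioo 0 t → 0 < s x - b x →
      ∃ d, HasDerivAt (fun x ↦ s x - b x) d x ∧ d ≤ K * (s x - b x) by
    have := hφ.nonpos_of_ae_hasDerivAt_le_mul ht.1 hφ0 hd
    linarith
  filter_upwards [hineq] with x hx hxt hφx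
  have hxε : x ∈ Ioo 0 ε := ⟨hxt.1, hxt.2.trans ht.2⟩
  obtain ⟨d, hd, hdle⟩ := hx (Ioo_subset_Ico_self hxε)
  refine ⟨_, (hd.hasDerivAt (Ico_mem_nhds hxε.1 hxε.2)).sub
    (hasDerivAt_mul_coth_mul_sub ha.ne' hxε.2.ne), ?_⟩
  have hsbK : s x + b x ≤ K :=
    (le_abs_self _).trans (hK x (uIcc_of_le ht.1 ▸ Ioo_subset_Icc_self hxt))
  nlinarith

theorem stmt_17_general (ε a : ℝ) (ha : 0 < a)
    (s : ℝ → ℝ) (hs : LocallyLipschitzOn (Ico 0 ε) s)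
    (hineq : ∀ᵐ t ∂(volume : Measure ℝ), t ∈ Ico 0 ε →
      ∃ d : ℝ, HasDerivWithinAt s d (Ico 0 ε) t ∧ 0 ≤ -d + (s t) ^ 2 - a ^ 2)
    (h0 : s 0 ≤ a * coth (a * ε)) :
    (∀ t ∈ Ico 0 ε, s t ≤ a * coth (a * (ε - t))) ∧
    (∀ T, 0 ≤ T → T < ε → ∀ t ∈ Icc 0 T, s t ≤ a * coth (a * (ε - T))) := by
  have hle : ∀ t ∈ Ico 0 ε, s t ≤ a * coth (a * (ε - t)) := fun t ht ↦
    le_mul_coth_mul_sub_of_ae_riccati ha hs hineq h0 ht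
  refine ⟨hle, fun T _ hTε t ht ↦ (hle t ⟨ht.1, ht.2.trans_lt hTε⟩).trans ?_⟩
  exact mul_le_mul_of_nonneg_left
    (coth_le_coth (mul_pos ha (sub_pos.mpr hTε)) (by nlinarith [ht.2])) ha.le

theorem stmt_17 (ε a : ℝ) (hε : 0 < ε) (ha : 0 < a)
    (s : ℝ → ℝ) (hs : LocallyLipschitzOn (Ico 0 ε) s)
    (hineq : ∀ᵐ t ∂(volume : Measure ℝ), t ∈ Ico 0 ε →
      ∃ d : ℝ, HasDerivWithinAt s d (Ico 0 ε) t ∧ 0 ≤ -d + (s t) ^ 2 - a ^ 2)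
    (h0 : s 0 ≤ a * coth (a * ε)) :
    (∀ t ∈ Ico 0 ε, s t ≤ a * coth (a * (ε - t))) ∧
    (∀ T, 0 ≤ T → T < ε → ∀ t ∈ Icc 0 T, s t ≤ a * coth (a * (ε - T))) :=
  stmt_17_general ε a ha s hs hineq h0
end
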